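/- arXiv:2103.07271 — 2 statements merged into one kernel-verified Lean document; each statement's English description precedes it below -/
import Mathlib

section
/- For any finite poset P and positive integer n, the number of strictly order-preserving maps P → [n] equals Σ_{w ∈ L(P)} C(n + des(w), p), where p = |P|, L(P) is the set of linear extensions of P (encoded as permutations via a fixed natural labeling), and des(w) is the number of descents of w. -/
/-!
Sort `P` by a map `φ : P → [n]`, breaking ties by decreasing label `ω`: this gives a unique
bijection `σ : P ≃ [p]`, and `φ` is then weakly increasing along the word `w = ω ∘ σ⁻¹`, strictly
at each ascent of `w`. Because `ω` is natural, `φ` is strictly order-preserving exactly when this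
`σ` is a linear extension. For a fixed `σ`, adding to the `i`-th value of `φ ∘ σ⁻¹` the number of
descents of `w` before position `i` turns these maps bijectively into strictly increasing maps
`[p] → [n + des w]`, of which there are `C(n + des w, p)`.
-/

open Finset

namespace Fin

variable {α : Type*} [Preorder α] {p : ℕ}

theorem strictMono_iff_lt_add_one {f : Fin p → α} :
    StrictMono f ↔ ∀ (i : Fin p) (h : (i : ℕ) + 1 < p), f i < f ⟨i + 1, h⟩ := by
  cases p with
  | zero => exact ⟨fun _ i => i.elim0, fun _ i => i.elim0⟩
  | succ m =>
    rw [strictMono_iff_lt_succ]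
    exact ⟨fun h i _ => h ⟨i, by omega⟩, fun h i => h i.castSucc (by simp)⟩

theorem monotone_iff_le_add_one {f : Fin p → α} :
    Monotone f ↔ ∀ (i : Fin p) (h : (i : ℕ) + 1 < p), f i ≤ f ⟨i + 1, h⟩ := by
  cases p with
  | zero => exact ⟨fun _ i => i.elim0, fun _ i => i.elim0⟩
  | succ m =>
    rw [monotone_iff_le_succ]
    exact ⟨fun h i _ => h ⟨i, by omega⟩, fun h i => h i.castSucc (by simp)⟩

theorem le_val_of_strictMono {f : Fin p → ℕ} (hf : StrictMono f) (i : Fin p) : (i : ℕ) ≤ f i := by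
  obtain ⟨i, hi⟩ := i
  induction i with
  | zero => exact Nat.zero_le _
  | succ k ih => exact (ih (by omega)).trans_lt (hf (Fin.mk_lt_mk.2 k.lt_succ_self))

end Fin

theorem Nat.card_strictMono_fin (α : Type*) [LinearOrder α] [Fintype α] (p : ℕ) :
    Nat.card {b : Fin p → α // StrictMono b} = (Fintype.card α).choose p := by
  let e : {b : Fin p → α // StrictMono b} ≃ {s : Finset α // #s = p} :=
    { toFun := fun b => ⟨univ.image b.1, by
        rw [Finset.card_image_of_injective _ b.2.injective, Finset.card_univ, Fintype.card_fin]⟩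
      invFun := fun s => ⟨fun i => s.1.orderEmbOfFin s.2 i, (s.1.orderEmbOfFin s.2).strictMono⟩
      left_inv := fun b => Subtype.ext
        (orderEmbOfFin_unique _ (fun i => mem_image_of_mem _ (mem_univ i)) b.2).symm
      right_inv := fun s => Subtype.ext <| coe_injective <| by
        rw [coe_image, coe_univ, Set.image_univ, range_orderEmbOfFin] }
  rw [Nat.card_congr e, Nat.card_eq_fintype_card, Fintype.card_finset_len]

open Count in
theorem Nat.card_fin_subtype_eq_count (D : ℕ → Prop) [DecidablePred D] (p : ℕ) :
    Nat.card {i : Fin p // D i} = Nat.count D p := by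
  rw [Nat.count_eq_card_fintype, Fintype.card_eq_nat_card]
  exact Nat.card_congr ((Fin.equivSubtype.subtypeEquiv fun _ => Iff.rfl).trans
    (Equiv.subtypeSubtypeEquivSubtypeInter _ _))

theorem Nat.card_subtype_eq_sum_card_of_existsUnique {ι α : Type*} [Fintype ι] [Finite α]
    {Q : α → Prop} {R : ι → α → Prop} (h : ∀ x, ∃! i, R i x) :
    Nat.card {x // Q x} = ∑ i, Nat.card {x // Q x ∧ R i x} := by
  rw [← Nat.card_sigma]
  refine Nat.card_congr (Equiv.ofBijective (fun y => ⟨y.2.1, y.2.2.1⟩) ⟨?_, ?_⟩).symm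
  · rintro ⟨i, x, _, hix⟩ ⟨j, y, _, hjy⟩ hxy
    obtain rfl : x = y := congrArg Subtype.val hxy
    obtain rfl := (h x).unique hix hjy
    rfl
  · rintro ⟨x, hx⟩
    obtain ⟨i, hi, -⟩ := h x
    exact ⟨⟨i, x, hx, hi⟩, rfl⟩

theorem existsUnique_equiv_fin_strictMono {P K : Type*} [Fintype P] [LinearOrder K] {f : P → K}
    (hf : Function.Injective f) {p : ℕ} (hp : Fintype.card P = p) :
    ∃! σ : P ≃ Fin p, StrictMono (f ∘ σ.symm) := by
  let : LinearOrder P := LinearOrder.lift' f hf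
  let e := Fintype.orderIsoFinOfCardEq P hp
  have he : StrictMono (f ∘ e) := fun _ _ h => e.strictMono h
  refine ⟨e.symm.toEquiv, he, fun σ hσ => Equiv.symm_bijective.injective ?_⟩
  have hrange : Set.range (f ∘ σ.symm) = Set.range (f ∘ e) := by
    rw [Set.range_comp, Set.range_comp, σ.symm.range_eq_univ, e.range_eq]
  exact Equiv.ext (congrFun (hf.comp_left ((hσ.range_inj he).1 hrange)))

section Words

variable {α β : Type*} {p : ℕ}

/-- Descent positions are taken in `ℕ`, so that they can be counted with `Nat.count`. -/
def IsDescent [LT β] (w : Fin p → β) (j : ℕ) : Prop :=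
  ∃ h : j + 1 < p, w ⟨j + 1, h⟩ < w ⟨j, Nat.lt_of_succ_lt h⟩

noncomputable def des [LT β] (w : Fin p → β) : ℕ :=
  Nat.card {i : Fin p // IsDescent w i}

def IsCompatible [Preorder α] [Preorder β] (a : Fin p → α) (w : Fin p → β) : Prop :=
  StrictMono fun i => toLex (a i, OrderDual.toDual (w i))

theorem isCompatible_iff [PartialOrder α] [Preorder β] {a : Fin p → α} {w : Fin p → β} :
    IsCompatible a w ↔ ∀ (i : Fin p) (h : (i : ℕ) + 1 < p),
      a i ≤ a ⟨i + 1, h⟩ ∧ (¬ IsDescent w i → a i < a ⟨i + 1, h⟩) := by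
  rw [IsCompatible, Fin.strictMono_iff_lt_add_one]
  refine forall₂_congr fun i h => ?_
  simp only [Prod.Lex.toLex_lt_toLex, OrderDual.toDual_lt_toDual, IsDescent, exists_prop_of_true h,
    le_iff_lt_or_eq]
  tauto

theorem strictMono_add_count_iff (D : ℕ → Prop) [DecidablePred D] (a : Fin p → ℕ) :
    StrictMono (fun i : Fin p => a i + Nat.count D i) ↔ ∀ (i : Fin p) (h : (i : ℕ) + 1 < p),
      a i ≤ a ⟨i + 1, h⟩ ∧ (¬ D i → a i < a ⟨i + 1, h⟩) := by
  rw [Fin.strictMono_iff_lt_add_one]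
  refine forall₂_congr fun i h => ?_
  simp only [Nat.count_succ]
  by_cases hD : D i
  · simp only [hD, ↓reduceIte, not_true_eq_false, IsEmpty.forall_iff, and_true]
    omega
  · simp only [hD, ↓reduceIte, add_zero, add_lt_add_iff_right, not_false_eq_true, forall_const,
      iff_and_self]
    omega

theorem isCompatible_iff_strictMono_add_count {n : ℕ} [Preorder β] {a : Fin p → Fin n}
    {w : Fin p → β} [DecidablePred (IsDescent w)] :
    IsCompatible a w ↔ StrictMono fun i => (a i : ℕ) + Nat.count (IsDescent w) i := by
  rw [isCompatible_iff, strictMono_add_count_iff]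
  rfl

theorem Nat.count_le_of_strictMono (D : ℕ → Prop) [DecidablePred D] {b : Fin p → ℕ}
    (hb : StrictMono b) (i : Fin p) : Nat.count D i ≤ b i :=
  (Nat.count_le _).trans (Fin.le_val_of_strictMono hb i)

theorem sub_count_lt_of_strictMono (D : ℕ → Prop) [DecidablePred D] (hD : ¬ D (p - 1))
    {b : Fin p → ℕ} (hb : StrictMono b) {n : ℕ} (hlt : ∀ i, b i < n + Nat.count D p)
    (i : Fin p) : b i - Nat.count D i < n := by
  have hcb := Nat.count_le_of_strictMono D hb
  have hmono : Monotone fun j : Fin p => b j - Nat.count D j := by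
    have hb' : StrictMono fun j : Fin p => b j - Nat.count D j + Nat.count D j := by
      simpa only [Nat.sub_add_cancel (hcb _)] using hb
    exact Fin.monotone_iff_le_add_one.2 fun j h => ((strictMono_add_count_iff D _).1 hb' j h).1
  obtain ⟨m, rfl⟩ : ∃ m, p = m + 1 := ⟨p - 1, by have := i.pos; omega⟩
  rw [Nat.add_sub_cancel] at hD
  have hlast := hlt (Fin.last m)
  rw [Nat.count_succ, if_neg hD] at hlast
  have := hmono (Fin.le_last i)
  have := hcb (Fin.last m)
  simp only [Fin.val_last] at *
  omega

theorem Nat.card_isCompatible [Preorder β] (n : ℕ) (w : Fin p → β) :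
    Nat.card {a : Fin p → Fin n // IsCompatible a w} = (n + des w).choose p := by
  classical
  have count_le_count (i : Fin p) : Nat.count (IsDescent w) i ≤ Nat.count (IsDescent w) p :=
    Nat.count_monotone _ i.is_lt.le
  have sub_add_count {N : ℕ} {b : Fin p → Fin N} (hb : StrictMono b) :
      (fun i => (b i : ℕ) - Nat.count (IsDescent w) i + Nat.count (IsDescent w) i) =
        fun i => (b i : ℕ) :=
    funext fun i => Nat.sub_add_cancel (Nat.count_le_of_strictMono _ (b := fun i => b i) hb i)
  have not_descent_last : ¬ IsDescent w (p - 1) := fun ⟨h, _⟩ => by omega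
  let e : {a : Fin p → Fin n // IsCompatible a w} ≃
      {b : Fin p → Fin (n + Nat.count (IsDescent w) p) // StrictMono b} :=
    { toFun := fun a => ⟨fun i => ⟨a.1 i + Nat.count (IsDescent w) i,
          Nat.add_lt_add_of_lt_of_le (a.1 i).is_lt (count_le_count i)⟩,
        isCompatible_iff_strictMono_add_count.1 a.2⟩
      invFun := fun b => ⟨fun i => ⟨b.1 i - Nat.count (IsDescent w) i,
          sub_count_lt_of_strictMono _ not_descent_last b.2 (fun i => (b.1 i).is_lt) i⟩,
        isCompatible_iff_strictMono_add_count.2 <| by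
          rw [sub_add_count b.2]
          exact b.2⟩
      left_inv := fun a => by ext; simp
      right_inv := fun b => by
        ext i
        exact congrFun (sub_add_count b.2) i }
  rw [Nat.card_congr e, Nat.card_strictMono_fin, Fintype.card_fin, des,
    Nat.card_fin_subtype_eq_count]

end Words

section LinearExtensions

variable {P α β : Type*} {p : ℕ}

theorem existsUnique_isCompatible [Fintype P] [LinearOrder α] [LinearOrder β] {ω : P → β}
    (hω : Function.Injective ω) (hp : Fintype.card P = p) (φ : P → α) :
    ∃! σ : P ≃ Fin p, IsCompatible (φ ∘ σ.symm) (ω ∘ σ.symm) :=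
  existsUnique_equiv_fin_strictMono (f := fun t => toLex (φ t, OrderDual.toDual (ω t)))
    (fun _ _ h => hω (congrArg (fun x => OrderDual.ofDual (ofLex x).2) h)) hp

theorem strictMono_iff_of_isCompatible [Preorder P] [Preorder α] [Preorder β] {ω : P → β}
    (hω : StrictMono ω) {φ : P → α} {σ : P ≃ Fin p}
    (hc : IsCompatible (φ ∘ σ.symm) (ω ∘ σ.symm)) : StrictMono φ ↔ StrictMono σ := by
  have key (s t : P) :
      toLex (φ s, OrderDual.toDual (ω s)) < toLex (φ t, OrderDual.toDual (ω t)) ↔ σ s < σ t := by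
    simpa using hc.lt_iff_lt (a := σ s) (b := σ t)
  refine ⟨fun hφ s t hst => (key s t).1 (Prod.Lex.toLex_lt_toLex.2 (Or.inl (hφ hst))),
    fun hσ s t hst => ?_⟩
  rcases Prod.Lex.toLex_lt_toLex.1 ((key s t).2 (hσ hst)) with h | ⟨-, h⟩
  · exact h
  · exact absurd (hω hst) (asymm h)

theorem Nat.card_strictMono_isCompatible [Preorder P] [Preorder β] {ω : P → β} (hω : StrictMono ω)
    (n : ℕ) (σ : P ≃ Fin p) [Decidable (StrictMono σ)] :
    Nat.card {φ : P → Fin n // StrictMono φ ∧ IsCompatible (φ ∘ σ.symm) (ω ∘ σ.symm)} =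
      if StrictMono σ then (n + des (ω ∘ σ.symm)).choose p else 0 := by
  split_ifs with hσ
  · rw [← Nat.card_isCompatible]
    refine Nat.card_congr ((Equiv.subtypeEquivRight fun φ => ?_).trans
      ((σ.arrowCongr (Equiv.refl _)).subtypeEquiv fun φ => Iff.rfl))
    exact ⟨And.right, fun hc => ⟨(strictMono_iff_of_isCompatible hω hc).2 hσ, hc⟩⟩
  · have : IsEmpty {φ : P → Fin n // StrictMono φ ∧ IsCompatible (φ ∘ σ.symm) (ω ∘ σ.symm)} :=
      ⟨fun φ => hσ ((strictMono_iff_of_isCompatible hω φ.2.2).1 φ.2.1)⟩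
    exact Nat.card_of_isEmpty

end LinearExtensions

open Classical in
/-- The number of strictly order-preserving maps `P → [n]` equals
`Σ_{w ∈ L(P)} C(n + des(w), p)`, summing over linear extensions `σ` encoded as
permutation words `w = ω ∘ σ⁻¹` via a fixed natural labeling `ω`. -/
theorem stmt_4 {P : Type*} [Fintype P] [DecidableEq P] [PartialOrder P]
    (n p : ℕ) (hp : p = Fintype.card P)
    (ω : P ≃ Fin p) (hω : ∀ s t : P, s < t → ω s < ω t) :
    Nat.card {φ : P → Fin n // ∀ s t : P, s < t → φ s < φ t} =
      ∑ σ : P ≃ Fin p,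
        if (∀ s t : P, s < t → σ s < σ t) then
          (n + Nat.card {i : Fin p // ∃ h : (i : ℕ) + 1 < p,
              (ω (σ.symm ⟨(i : ℕ) + 1, h⟩) : ℕ) < (ω (σ.symm i) : ℕ)}).choose p
        else 0 := by
  rw [Nat.card_subtype_eq_sum_card_of_existsUnique
    (existsUnique_isCompatible (α := Fin n) ω.injective hp.symm)]
  exact Finset.sum_congr rfl fun σ _ => Nat.card_strictMono_isCompatible hω n σ
end

section
/- Let P be a finite poset and n ≥ 1. For a pair (A, μ) with A ⊆ P and μ : A → [n] strictly order-preserving, let its canonical extension μ̃ : P → {0,1,...,n} be defined by μ̃(s)=μ(s) for s ∈ A and μ̃(s)=max({μ(t) | t ∈ A, t < s} ∪ {0}) otherwise. Then the map sending (A,μ) to μ̃ is injective, and A is recoverable from μ̃ as A = {s ∈ P | μ̃(s) > max({μ̃(t) | t < s} ∪ {0})}. -/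
open Finset in
private lemma stmt_9_sup {P : Type*} [Fintype P] [PartialOrder P] [DecidableEq P]
    [DecidableRel ((· < ·) : P → P → Prop)]
    (A : Finset P) (μ : P → ℕ)
    (ν : P → ℕ)
    (hν : ∀ s, ν s = if s ∈ A then μ s else (A.filter (fun a => a < s)).sup μ)
    (s : P) :
    (Finset.univ.filter (fun t => t < s)).sup ν = (A.filter (fun a => a < s)).sup μ := by
  apply le_antisymm
  · apply Finset.sup_le
    intro t ht
    simp only [mem_filter, mem_univ, true_and] at ht
    rw [hν t]
    split
    · exact Finset.le_sup (by simp [ht, *])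
    · apply Finset.sup_le
      intro a ha
      simp only [mem_filter] at ha
      exact Finset.le_sup (by simp [ha.1, ha.2.trans ht])
  · apply Finset.sup_le
    intro a ha
    simp only [mem_filter] at ha
    calc μ a = ν a := by rw [hν a]; simp [ha.1]
    _ ≤ _ := Finset.le_sup (by simp [ha.2])

open Finset in
private lemma stmt_9_mem {P : Type*} [Fintype P] [PartialOrder P] [DecidableEq P]
    [DecidableRel ((· < ·) : P → P → Prop)]
    (A : Finset P) (μ : P → ℕ)
    (hrange : ∀ s ∈ A, 1 ≤ μ s ∧ μ s ≤ 0 + μ s)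
    (hstrict : ∀ s ∈ A, ∀ t ∈ A, s < t → μ s < μ t)
    (hpos : ∀ s ∈ A, 1 ≤ μ s)
    (ν : P → ℕ)
    (hν : ∀ s, ν s = if s ∈ A then μ s else (A.filter (fun a => a < s)).sup μ) :
    ∀ s : P, s ∈ A ↔ (Finset.univ.filter (fun t => t < s)).sup ν < ν s := by
  intro s
  rw [stmt_9_sup A μ ν hν s]
  constructor
  · intro hs
    rw [hν s, if_pos hs]
    rw [Finset.sup_lt_iff (a := μ s) (by exact hpos s hs)]
    intro a ha
    simp only [mem_filter] at ha
    exact hstrict a ha.1 s hs ha.2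
  · intro h
    by_contra hs
    rw [hν s, if_neg hs] at h
    exact lt_irrefl _ h

open Finset in
/-- The map `(A, μ) ↦ μ̃` (canonical extension) is injective, and `A` is
recoverable from `μ̃` as `A = {s | μ̃(s) > max({μ̃(t) | t < s} ∪ {0})}`. -/
theorem stmt_9 {P : Type*} [Fintype P] [PartialOrder P] [DecidableEq P]
    [DecidableRel ((· < ·) : P → P → Prop)]
    (n : ℕ)
    (A₁ A₂ : Finset P) (μ₁ μ₂ : P → ℕ)
    (hrange₁ : ∀ s ∈ A₁, 1 ≤ μ₁ s ∧ μ₁ s ≤ n)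
    (hstrict₁ : ∀ s ∈ A₁, ∀ t ∈ A₁, s < t → μ₁ s < μ₁ t)
    (hrange₂ : ∀ s ∈ A₂, 1 ≤ μ₂ s ∧ μ₂ s ≤ n)
    (hstrict₂ : ∀ s ∈ A₂, ∀ t ∈ A₂, s < t → μ₂ s < μ₂ t)
    (ν₁ ν₂ : P → ℕ)
    (hν₁ : ∀ s, ν₁ s = if s ∈ A₁ then μ₁ s else (A₁.filter (fun a => a < s)).sup μ₁)
    (hν₂ : ∀ s, ν₂ s = if s ∈ A₂ then μ₂ s else (A₂.filter (fun a => a < s)).sup μ₂) :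
    (ν₁ = ν₂ → A₁ = A₂ ∧ ∀ s ∈ A₁, μ₁ s = μ₂ s) ∧
    (∀ s : P, s ∈ A₁ ↔ (Finset.univ.filter (fun t => t < s)).sup ν₁ < ν₁ s) := by
  have h1 := stmt_9_mem A₁ μ₁ (fun s hs => ⟨(hrange₁ s hs).1, by omega⟩) hstrict₁
    (fun s hs => (hrange₁ s hs).1) ν₁ hν₁
  have h2 := stmt_9_mem A₂ μ₂ (fun s hs => ⟨(hrange₂ s hs).1, by omega⟩) hstrict₂
    (fun s hs => (hrange₂ s hs).1) ν₂ hν₂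
  refine ⟨fun heq => ?_, h1⟩
  have hA : A₁ = A₂ := by
    ext s
    rw [h1 s, h2 s, heq]
  refine ⟨hA, fun s hs => ?_⟩
  have h1' := hν₁ s
  have h2' := hν₂ s
  rw [if_pos hs] at h1'
  rw [if_pos (hA ▸ hs)] at h2'
  rw [← h1', ← h2', heq]
end
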